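/- arXiv:1202.1220 — 6 statements merged into one kernel-verified Lean document; each statement's English description precedes it below -/
import Mathlib

section
/- Let $n\ge 4$ be a real number and define $q(x)=\dfrac{x}{2+\sqrt{x-1}}$ for $x\ge 2$. Then the function $x\mapsto q(x)+q(n-x)$ is nondecreasing on the interval $[2,\tfrac{n}{2}]$. -/
open Set

private lemma Hmono (u v w : ℝ) (hu : 1 ≤ u) (hv : 1 ≤ v) (hvw : v ≤ w) :
    (u*w+2*u+2*w-1) / ((u+w)*(u+2)*(w+2)) ≤ (u*v+2*u+2*v-1) / ((u+v)*(u+2)*(v+2)) := by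
  have hw : 1 ≤ w := le_trans hv hvw
  have hden1 : (0:ℝ) < (u+w)*(u+2)*(w+2) := by positivity
  have hden2 : (0:ℝ) < (u+v)*(u+2)*(v+2) := by positivity
  rw [div_le_div_iff₀ hden1 hden2]
  have hbr : (0:ℝ) ≤ 2*v*w - v - w - 2 + u*(v*w+2*v+2*w-1) := by
    nlinarith [mul_nonneg (sub_nonneg.2 hu) (show (0:ℝ) ≤ v*w+2*v+2*w-1 by nlinarith),
      mul_nonneg (sub_nonneg.2 hv) (sub_nonneg.2 hw)]
  nlinarith [mul_nonneg (sub_nonneg.2 hvw) hbr, mul_nonneg (mul_nonneg (sub_nonneg.2 hvw) hbr) (show (0:ℝ) ≤ u + 2 by linarith)]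

/-- For `n ≥ 4`, the function `x ↦ q(x) + q(n-x)`, with `q(x) = x/(2+√(x-1))`, is
nondecreasing on `[2, n/2]`. -/
theorem q_sum_monotone (n : ℝ) (hn : 4 ≤ n) :
    MonotoneOn
      (fun x : ℝ => x / (2 + Real.sqrt (x - 1)) + (n - x) / (2 + Real.sqrt (n - x - 1)))
      (Icc (2:ℝ) (n / 2)) := by
  intro x hx y hy hxy
  obtain ⟨hx2, hxn⟩ := hx
  obtain ⟨hy2, hyn⟩ := hy
  dsimp only
  set a := Real.sqrt (x - 1) with ha
  set b := Real.sqrt (n - x - 1) with hb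
  set c := Real.sqrt (y - 1) with hc
  set d := Real.sqrt (n - y - 1) with hd
  have ha1 : 1 ≤ a := by
    have h := Real.sqrt_le_sqrt (show (1:ℝ) ≤ x - 1 by linarith)
    rwa [Real.sqrt_one] at h
  have hac : a ≤ c := Real.sqrt_le_sqrt (by linarith)
  have hcd : c ≤ d := Real.sqrt_le_sqrt (by linarith)
  have hdb : d ≤ b := Real.sqrt_le_sqrt (by linarith)
  have hc1 : 1 ≤ c := le_trans ha1 hac
  have hd1 : 1 ≤ d := le_trans hc1 hcd
  have hb1 : 1 ≤ b := le_trans hd1 hdb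
  have ha2 : a^2 = x - 1 := Real.sq_sqrt (by linarith)
  have hb2 : b^2 = n - x - 1 := Real.sq_sqrt (by linarith)
  have hc2 : c^2 = y - 1 := Real.sq_sqrt (by linarith)
  have hd2 : d^2 = n - y - 1 := Real.sq_sqrt (by linarith)
  have hxv : x = a^2 + 1 := by linarith
  have hyv : y = c^2 + 1 := by linarith
  have hnx : n - x = b^2 + 1 := by linarith
  have hny : n - y = d^2 + 1 := by linarith
  have hyx2 : y - x = b^2 - d^2 := by linarith
  have p1 : (0:ℝ) < 2 + a := by linarith
  have p2 : (0:ℝ) < 2 + b := by linarith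
  have p3 : (0:ℝ) < 2 + c := by linarith
  have p4 : (0:ℝ) < 2 + d := by linarith
  have pac : (0:ℝ) < a + c := by linarith
  have pbd : (0:ℝ) < b + d := by linarith
  -- difference identities
  have e1 : y/(2+c) - x/(2+a) = (y-x) * ((a*c+2*a+2*c-1)/((a+c)*(a+2)*(c+2))) := by
    rw [hxv, hyv]
    field_simp
    ring
  have e2 : (n-x)/(2+b) - (n-y)/(2+d) = (y-x) * ((b*d+2*b+2*d-1)/((b+d)*(b+2)*(d+2))) := by
    rw [hyx2, hnx, hny]
    field_simp
    ring
  -- chain of H inequalities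
  have s1 : (d*b+2*d+2*b-1)/((d+b)*(d+2)*(b+2)) ≤ (d*c+2*d+2*c-1)/((d+c)*(d+2)*(c+2)) :=
    Hmono d c b hd1 hc1 (le_trans hcd hdb)
  have s2 : (c*d+2*c+2*d-1)/((c+d)*(c+2)*(d+2)) ≤ (c*a+2*c+2*a-1)/((c+a)*(c+2)*(a+2)) :=
    Hmono c a d hc1 ha1 (le_trans hac hcd)
  have sym1 : (b*d+2*b+2*d-1)/((b+d)*(b+2)*(d+2)) = (d*b+2*d+2*b-1)/((d+b)*(d+2)*(b+2)) := by
    ring_nf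
  have sym2 : (d*c+2*d+2*c-1)/((d+c)*(d+2)*(c+2)) = (c*d+2*c+2*d-1)/((c+d)*(c+2)*(d+2)) := by
    ring_nf
  have sym3 : (c*a+2*c+2*a-1)/((c+a)*(c+2)*(a+2)) = (a*c+2*a+2*c-1)/((a+c)*(a+2)*(c+2)) := by
    ring_nf
  have key : (b*d+2*b+2*d-1)/((b+d)*(b+2)*(d+2)) ≤ (a*c+2*a+2*c-1)/((a+c)*(a+2)*(c+2)) := by
    rw [sym1, ← sym3]
    exact le_trans s1 (by rw [sym2]; exact s2)
  have hyx0 : (0:ℝ) ≤ y - x := by linarith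
  have hmul := mul_le_mul_of_nonneg_left key hyx0
  linarith [e1, e2, hmul]
end

section
/- Let $n\ge 4$ be a real number and let $m,k$ be real numbers with $m\ge 2$, $k\ge 2$ and $m+k=n$. Define $q_{m,k}=\dfrac{m}{2+\sqrt{m-1}}+\dfrac{k}{2+\sqrt{k-1}}$. Then $q_{2,n-2}\le q_{m,k}\le q_{\frac n2,\frac n2}$, i.e. $\dfrac{2}{3}+\dfrac{n-2}{2+\sqrt{n-3}}\ \le\ \dfrac{m}{2+\sqrt{m-1}}+\dfrac{k}{2+\sqrt{k-1}}\ \le\ \dfrac{n}{2+\sqrt{\frac n2-1}}$. -/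
lemma qmk_lower_aux (a b c : ℝ) (ha : 1 ≤ a) (hb : 1 ≤ b) (hc : 1 ≤ c)
    (hcc : c^2 = a^2+b^2-1) :
    2/3 + (a^2+b^2)/(2+c) ≤ (a^2+1)/(2+a) + (b^2+1)/(2+b) := by
  have h1 : (0:ℝ) < 2 + a := by linarith
  have h2 : (0:ℝ) < 2 + b := by linarith
  have h3 : (0:ℝ) < 2 + c := by linarith
  have hca : a ≤ c := by nlinarith
  have hcb : b ≤ c := by nlinarith
  have habc : c ≤ a + b := by nlinarith
  rw [div_add_div _ _ (by norm_num : (3:ℝ) ≠ 0) (ne_of_gt h3),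
    div_add_div _ _ (ne_of_gt h1) (ne_of_gt h2),
    div_le_div_iff₀ (by positivity) (by positivity)]
  nlinarith [mul_nonneg (mul_nonneg (sub_nonneg.2 ha) (sub_nonneg.2 hb)) (sub_nonneg.2 hc),
    mul_nonneg (sub_nonneg.2 ha) (sub_nonneg.2 hb),
    mul_nonneg (sub_nonneg.2 hca) (sub_nonneg.2 hb),
    mul_nonneg (sub_nonneg.2 hcb) (sub_nonneg.2 ha),
    mul_nonneg (mul_nonneg (sub_nonneg.2 ha) (sub_nonneg.2 hb)) (sub_nonneg.2 habc),
    sq_nonneg (a-1), sq_nonneg (b-1), sq_nonneg (a-b), mul_pos h1 h2,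
    mul_pos (mul_pos h1 h2) h3]

lemma qmk_upper_aux (a b d : ℝ) (ha : 1 ≤ a) (hb : 1 ≤ b) (hd : 1 ≤ d)
    (hdd : d^2 = (a^2+b^2)/2) :
    (a^2+1)/(2+a) + (b^2+1)/(2+b) ≤ (a^2+b^2+2)/(2+d) := by
  have h1 : (0:ℝ) < 2 + a := by linarith
  have h2 : (0:ℝ) < 2 + b := by linarith
  have h3 : (0:ℝ) < 2 + d := by linarith
  have hab : a + b ≤ 2*d := by nlinarith [sq_nonneg (a-b)]
  rw [div_add_div _ _ (ne_of_gt h1) (ne_of_gt h2), div_le_div_iff₀ (by positivity) h3]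
  nlinarith [sq_nonneg (a-b),
    mul_nonneg (mul_nonneg (sub_nonneg.2 ha) (sub_nonneg.2 hb)) (sub_nonneg.2 hd),
    sq_nonneg (a+b-2*d), mul_nonneg (sub_nonneg.2 ha) (sub_nonneg.2 hb),
    sq_nonneg (a*b - d), mul_pos h1 h2, mul_pos (mul_pos h1 h2) h3]

/-- For real `m, k ≥ 2` with `m + k = n`, one has `q_{2,n-2} ≤ q_{m,k} ≤ q_{n/2,n/2}`, where
`q_{m,k} = m/(2+√(m-1)) + k/(2+√(k-1))`. -/
theorem qmk_between (n m k : ℝ) (hn : 4 ≤ n) (hm : 2 ≤ m) (hk : 2 ≤ k) (hmk : m + k = n) :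
    2 / 3 + (n - 2) / (2 + Real.sqrt (n - 3))
        ≤ m / (2 + Real.sqrt (m - 1)) + k / (2 + Real.sqrt (k - 1)) ∧
      m / (2 + Real.sqrt (m - 1)) + k / (2 + Real.sqrt (k - 1))
        ≤ n / (2 + Real.sqrt (n / 2 - 1)) := by
  set a := Real.sqrt (m - 1) with ha_def
  set b := Real.sqrt (k - 1) with hb_def
  set c := Real.sqrt (n - 3) with hc_def
  set d := Real.sqrt (n / 2 - 1) with hd_def
  have ha2 : a^2 = m - 1 := Real.sq_sqrt (by linarith)
  have hb2 : b^2 = k - 1 := Real.sq_sqrt (by linarith)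
  have hc2 : c^2 = n - 3 := Real.sq_sqrt (by linarith)
  have hd2 : d^2 = n / 2 - 1 := Real.sq_sqrt (by linarith)
  have ha1 : 1 ≤ a := by
    have := Real.sqrt_le_sqrt (show (1:ℝ) ≤ m - 1 by linarith)
    simpa [ha_def] using this
  have hb1 : 1 ≤ b := by
    have := Real.sqrt_le_sqrt (show (1:ℝ) ≤ k - 1 by linarith)
    simpa [hb_def] using this
  have hc1 : 1 ≤ c := by
    have := Real.sqrt_le_sqrt (show (1:ℝ) ≤ n - 3 by linarith)
    simpa [hc_def] using this
  have hd1 : 1 ≤ d := by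
    have := Real.sqrt_le_sqrt (show (1:ℝ) ≤ n / 2 - 1 by linarith)
    simpa [hd_def] using this
  have hm' : m = a^2 + 1 := by linarith
  have hk' : k = b^2 + 1 := by linarith
  have hn2 : n - 2 = a^2 + b^2 := by linarith
  have hn' : n = a^2 + b^2 + 2 := by linarith
  constructor
  · rw [hm', hk', hn2]
    exact qmk_lower_aux a b c ha1 hb1 hc1 (by linarith)
  · rw [hm', hk', hn']
    exact qmk_upper_aux a b d ha1 hb1 hd1 (by linarith)
end

section
/- Let $m\ge 2$ and $k\ge 2$ be integers and set $n=m+k$. Define $q_{m,k}=\dfrac{m}{2+\sqrt{m-1}}+\dfrac{k}{2+\sqrt{k-1}}$. Then $q_{m,k}<2$ if and only if $n\le 7$; moreover, if $n\ge 8$ then $q_{m,k}>2$. -/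
noncomputable def qf (a : ℕ) : ℝ := (a : ℝ) / (2 + Real.sqrt ((a : ℝ) - 1))

lemma qf_pos_den (a : ℕ) : (0:ℝ) < 2 + Real.sqrt ((a : ℝ) - 1) := by
  have := Real.sqrt_nonneg ((a:ℝ) - 1); linarith

lemma qf_mono {a b : ℕ} (ha : 2 ≤ a) (hab : a ≤ b) : qf a ≤ qf b := by
  have haR : (2:ℝ) ≤ (a:ℝ) := by exact_mod_cast ha
  have habR : (a:ℝ) ≤ (b:ℝ) := by exact_mod_cast hab
  have hbR : (2:ℝ) ≤ (b:ℝ) := le_trans haR habR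
  set sa := Real.sqrt ((a:ℝ) - 1) with hsa
  set sb := Real.sqrt ((b:ℝ) - 1) with hsb
  have hsa0 : 0 ≤ sa := Real.sqrt_nonneg _
  have hsb0 : 0 ≤ sb := Real.sqrt_nonneg _
  have hsa2 : sa ^ 2 = (a:ℝ) - 1 := Real.sq_sqrt (by linarith)
  have hsb2 : sb ^ 2 = (b:ℝ) - 1 := Real.sq_sqrt (by linarith)
  unfold qf
  rw [div_le_div_iff₀ (by positivity) (by positivity)]
  have key : (a:ℝ) * sb ≤ (b:ℝ) * sa := by
    have h1 : ((a:ℝ) * sb) ^ 2 ≤ ((b:ℝ) * sa) ^ 2 := by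
      have hfac : (0:ℝ) ≤ ((b:ℝ) - a) * ((a:ℝ) * b - a - b) := by
        apply mul_nonneg (by linarith)
        nlinarith
      have e1 : ((a:ℝ) * sb) ^ 2 = (a:ℝ)^2 * ((b:ℝ) - 1) := by rw [mul_pow, hsb2]
      have e2 : ((b:ℝ) * sa) ^ 2 = (b:ℝ)^2 * ((a:ℝ) - 1) := by rw [mul_pow, hsa2]
      rw [e1, e2]; nlinarith [hfac]
    have := Real.sqrt_le_sqrt h1
    rwa [Real.sqrt_sq (by positivity), Real.sqrt_sq (by positivity)] at this
  nlinarith [key, habR]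

/-- For integers `m, k ≥ 2` with `n = m + k`: `q_{m,k} < 2` if and only if `n ≤ 7`; moreover,
if `n ≥ 8` then `q_{m,k} > 2`, where `q_{m,k} = m/(2+√(m-1)) + k/(2+√(k-1))`. -/
theorem qmk_lt_two_iff (m k : ℕ) (hm : 2 ≤ m) (hk : 2 ≤ k) :
    ((m : ℝ) / (2 + Real.sqrt ((m : ℝ) - 1)) + (k : ℝ) / (2 + Real.sqrt ((k : ℝ) - 1)) < 2
        ↔ m + k ≤ 7) ∧
      (8 ≤ m + k →
        2 < (m : ℝ) / (2 + Real.sqrt ((m : ℝ) - 1)) + (k : ℝ) / (2 + Real.sqrt ((k : ℝ) - 1))) := by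
  -- numeric sqrt facts
  have s1 : Real.sqrt 1 = 1 := Real.sqrt_one
  have s4 : Real.sqrt 4 = 2 := by
    rw [show (4:ℝ) = 2 ^ 2 by norm_num, Real.sqrt_sq (by norm_num)]
  have s2l : (1.414 : ℝ) < Real.sqrt 2 := by
    rw [show (1.414:ℝ) = Real.sqrt (1.414 ^ 2) from (Real.sqrt_sq (by norm_num)).symm]
    exact Real.sqrt_lt_sqrt (by norm_num) (by norm_num)
  have s2u : Real.sqrt 2 < 1.4143 := by
    rw [show (1.4143:ℝ) = Real.sqrt (1.4143 ^ 2) from (Real.sqrt_sq (by norm_num)).symm]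
    exact Real.sqrt_lt_sqrt (by norm_num) (by norm_num)
  have s3l : (1.732 : ℝ) < Real.sqrt 3 := by
    rw [show (1.732:ℝ) = Real.sqrt (1.732 ^ 2) from (Real.sqrt_sq (by norm_num)).symm]
    exact Real.sqrt_lt_sqrt (by norm_num) (by norm_num)
  have s3u : Real.sqrt 3 < 1.7321 := by
    rw [show (1.7321:ℝ) = Real.sqrt (1.7321 ^ 2) from (Real.sqrt_sq (by norm_num)).symm]
    exact Real.sqrt_lt_sqrt (by norm_num) (by norm_num)
  have s5u : Real.sqrt 5 < 2.2361 := by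
    rw [show (2.2361:ℝ) = Real.sqrt (2.2361 ^ 2) from (Real.sqrt_sq (by norm_num)).symm]
    exact Real.sqrt_lt_sqrt (by norm_num) (by norm_num)
  have s2p : (0:ℝ) < 2 + Real.sqrt 2 := by linarith
  have s3p : (0:ℝ) < 2 + Real.sqrt 3 := by linarith
  have s5p : (0:ℝ) < 2 + Real.sqrt 5 := by positivity
  -- values of qf at small points
  have q2 : qf 2 = 2/3 := by unfold qf; norm_num [s1]
  have q5 : qf 5 = 5/4 := by unfold qf; norm_num [s4]
  have q3u : qf 3 < 3/3.414 := by
    unfold qf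
    rw [show ((3:ℕ):ℝ) - 1 = 2 by norm_num]
    push_cast
    exact div_lt_div_of_pos_left (by norm_num) (by norm_num) (by linarith)
  have q3l : 3/3.4143 < qf 3 := by
    unfold qf
    rw [show ((3:ℕ):ℝ) - 1 = 2 by norm_num]
    push_cast
    exact div_lt_div_of_pos_left (by norm_num) s2p (by linarith)
  have q4u : qf 4 < 4/3.732 := by
    unfold qf
    rw [show ((4:ℕ):ℝ) - 1 = 3 by norm_num]
    push_cast
    exact div_lt_div_of_pos_left (by norm_num) (by norm_num) (by linarith)
  have q4l : 4/3.7321 < qf 4 := by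
    unfold qf
    rw [show ((4:ℕ):ℝ) - 1 = 3 by norm_num]
    push_cast
    exact div_lt_div_of_pos_left (by norm_num) s3p (by linarith)
  have q6l : 6/4.2361 < qf 6 := by
    unfold qf
    rw [show ((6:ℕ):ℝ) - 1 = 5 by norm_num]
    push_cast
    exact div_lt_div_of_pos_left (by norm_num) s5p (by linarith)
  have hgoal_eq : (m : ℝ) / (2 + Real.sqrt ((m : ℝ) - 1)) + (k : ℝ) / (2 + Real.sqrt ((k : ℝ) - 1))
      = qf m + qf k := rfl
  rw [hgoal_eq]
  have part2 : 8 ≤ m + k → 2 < qf m + qf k := by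
    intro h
    have hcases : (m = 2 ∧ 6 ≤ k) ∨ (m = 3 ∧ 5 ≤ k) ∨ (m = 4 ∧ 4 ≤ k) ∨
        (m = 5 ∧ 3 ≤ k) ∨ 6 ≤ m := by omega
    have base26 : 2 < qf 2 + qf 6 := by rw [q2]; linarith
    have base35 : 2 < qf 3 + qf 5 := by rw [q5]; linarith
    have base44 : 2 < qf 4 + qf 4 := by linarith
    rcases hcases with ⟨rfl, hk6⟩ | ⟨rfl, hk5⟩ | ⟨rfl, hk4⟩ | ⟨rfl, hk3⟩ | hm6
    · have := qf_mono (by norm_num) hk6; linarith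
    · have := qf_mono (by norm_num) hk5
      have h5 := qf_mono (by norm_num : 2 ≤ 5) hk5
      linarith [qf_mono (by norm_num : (2:ℕ) ≤ 5) hk5]
    · linarith [qf_mono (by norm_num : (2:ℕ) ≤ 4) hk4]
    · have b53 : 2 < qf 5 + qf 3 := by linarith
      linarith [qf_mono (by norm_num : (2:ℕ) ≤ 3) hk3]
    · have b62 : 2 < qf 6 + qf 2 := by linarith
      linarith [qf_mono (by norm_num : (2:ℕ) ≤ 6) hm6, qf_mono hk (le_refl k),
        qf_mono (by norm_num : (2:ℕ) ≤ 2) hk]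
  refine ⟨⟨fun hlt => ?_, fun hle => ?_⟩, part2⟩
  · by_contra hn
    have := part2 (by omega)
    linarith
  · have hm5 : m ≤ 5 := by omega
    have hk5 : k ≤ 5 := by omega
    interval_cases m <;> interval_cases k <;> try omega
    all_goals linarith [q2, q5, q3u, q4u]
end

section
/- Let $m\ge 2$ and $k\ge 2$ be integers with $n=m+k\ge 8$. Define $q_{m,k}=\dfrac{m}{2+\sqrt{m-1}}+\dfrac{k}{2+\sqrt{k-1}}$ and $p_{m,k}=2+\dfrac{4}{q_{m,k}-2}$. Then $q_{m,k}>2$ (so $p_{m,k}$ is well defined) and $p_{m,k}>\dfrac{2n}{n-4}$. -/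
set_option maxHeartbeats 1000000

lemma pmk_aux (x y : ℝ) (hx : 2 ≤ x) (hy : 2 ≤ y) (hs : 8 ≤ x + y) :
    2 < 4 * x / (11 + x) + 4 * y / (11 + y) := by
  rw [div_add_div _ _ (by positivity) (by positivity), lt_div_iff₀ (by positivity)]
  nlinarith [mul_nonneg (sub_nonneg.2 hx) (sub_nonneg.2 hy)]

lemma pmk_main (x y a b : ℝ) (hx : 2 ≤ x) (hy : 2 ≤ y) (hs : 8 ≤ x + y)
    (ha0 : 0 ≤ a) (hasq : a ^ 2 = x - 1) (hb0 : 0 ≤ b) (hbsq : b ^ 2 = y - 1) :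
    2 < x / (2 + a) + y / (2 + b) ∧ x / (2 + a) + y / (2 + b) < (x + y) / 2 := by
  have ha1 : 1 ≤ a := by nlinarith [sq_nonneg (a - 1)]
  have hb1 : 1 ≤ b := by nlinarith [sq_nonneg (b - 1)]
  have hau : a ≤ (x + 3) / 4 := by nlinarith [sq_nonneg (x - 5), sq_nonneg (a - (x + 3) / 4)]
  have hbu : b ≤ (y + 3) / 4 := by nlinarith [sq_nonneg (y - 5), sq_nonneg (b - (y + 3) / 4)]
  have hma : (0:ℝ) < 2 + a := by linarith
  have hkb : (0:ℝ) < 2 + b := by linarith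
  have hq1 : 4 * x / (11 + x) ≤ x / (2 + a) := by
    rw [div_le_div_iff₀ (by linarith) hma]; nlinarith
  have hq2 : 4 * y / (11 + y) ≤ y / (2 + b) := by
    rw [div_le_div_iff₀ (by linarith) hkb]; nlinarith
  have hq3 := pmk_aux x y hx hy hs
  constructor
  · linarith
  · have h1 : x / (2 + a) < x / 2 := by
      rw [div_lt_div_iff₀ hma two_pos]; nlinarith
    have h2 : y / (2 + b) < y / 2 := by
      rw [div_lt_div_iff₀ hkb two_pos]; nlinarith
    linarith

/-- For integers `m, k ≥ 2` with `n = m + k ≥ 8`, one has `q_{m,k} > 2` and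
`p_{m,k} = 2 + 4/(q_{m,k}-2) > 2n/(n-4)`. -/
theorem pmk_gt_critical (m k n : ℕ) (hm : 2 ≤ m) (hk : 2 ≤ k) (hn : n = m + k) (h8 : 8 ≤ n) :
    2 < (m : ℝ) / (2 + Real.sqrt ((m : ℝ) - 1)) + (k : ℝ) / (2 + Real.sqrt ((k : ℝ) - 1)) ∧
      2 * (n : ℝ) / ((n : ℝ) - 4)
        < 2 + 4 / ((m : ℝ) / (2 + Real.sqrt ((m : ℝ) - 1))
            + (k : ℝ) / (2 + Real.sqrt ((k : ℝ) - 1)) - 2) := by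
  have hm' : (2:ℝ) ≤ m := by exact_mod_cast hm
  have hk' : (2:ℝ) ≤ k := by exact_mod_cast hk
  have hn' : (n:ℝ) = m + k := by rw [hn]; push_cast; ring
  have h8' : (8:ℝ) ≤ n := by exact_mod_cast h8
  obtain ⟨hQ, hup⟩ := pmk_main (m:ℝ) (k:ℝ) (Real.sqrt ((m:ℝ) - 1)) (Real.sqrt ((k:ℝ) - 1))
    hm' hk' (by linarith) (Real.sqrt_nonneg _) (Real.sq_sqrt (by linarith))
    (Real.sqrt_nonneg _) (Real.sq_sqrt (by linarith))
  refine ⟨hQ, ?_⟩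
  set q := (m:ℝ) / (2 + Real.sqrt ((m:ℝ) - 1)) + (k:ℝ) / (2 + Real.sqrt ((k:ℝ) - 1)) with hqdef
  clear_value q
  have hupn : q < (n:ℝ) / 2 := by rw [hn']; linarith
  have hn4 : (4:ℝ) < n := by linarith
  have key : 8 / ((n:ℝ) - 4) < 4 / (q - 2) := by
    rw [div_lt_div_iff₀ (by linarith) (by linarith)]
    linarith
  have h0 : (n:ℝ) - 4 ≠ 0 := by linarith
  have hrw : 2 * (n:ℝ) / ((n:ℝ) - 4) = 2 + 8 / ((n:ℝ) - 4) := by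
    field_simp
    ring
  linarith
end

section
/- Let $\Omega\subseteq\mathbb{R}^n$ be open and let $W:\Omega\to\mathbb{R}$ be continuous. Assume that $\int_\Omega\big(|\nabla\xi|^2 - W\,\xi^2\big)\,dx\ \ge\ 0$ for every $C^1$ function $\xi:\Omega\to\mathbb{R}$ with compact support contained in $\Omega$. Let $V\subseteq\Omega$ be open, let $c:V\to\mathbb{R}$ be twice continuously differentiable, and let $\eta:V\to\mathbb{R}$ be $C^1$ with compact support contained in $V$. Then $\int_{V} c\,\big(\Delta c + W\,c\big)\,\eta^2\,dx\ \le\ \int_{V} c^2\,|\nabla\eta|^2\,dx$. -/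
/-!
Test the stability inequality with `ξ = c η`. Pointwise
`|∇(c η)|² = ∇(c η²) · ∇c + c² |∇η|²`, and integrating by parts turns `∫ ∇(c η²) · ∇c` into
`-∫ c η² Δc`; the nonnegativity of `∫ |∇ξ|² - W ξ²` is then exactly the claimed inequality.
Since `c` is only `C²` on `V`, it is first replaced by a global `C²` function (a smooth cutoff
times `c`) that agrees with `c` near the support of `η`.
-/
open MeasureTheory

/-- The partial derivative `∂_{x_l} w`. -/
noncomputable def pd {n : ℕ} (l : Fin n) (w : EuclideanSpace ℝ (Fin n) → ℝ) :
    EuclideanSpace ℝ (Fin n) → ℝ :=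
  fun x => fderiv ℝ w x (EuclideanSpace.single l 1)

/-- The Laplacian `Δw = ∑_l ∂²_{x_l x_l} w`. -/
noncomputable def lap {n : ℕ} (w : EuclideanSpace ℝ (Fin n) → ℝ) :
    EuclideanSpace ℝ (Fin n) → ℝ :=
  fun x => ∑ l : Fin n, pd l (pd l w) x

open Filter Topology Manifold

section Localization

variable {E F : Type*} [NormedAddCommGroup E] [NormedSpace ℝ E] [FiniteDimensional ℝ E]
  [NormedAddCommGroup F] [NormedSpace ℝ F]

theorem exists_contDiff_eventuallyEq_nhdsSet {k : ℕ∞} {c : E → F} {V K : Set E}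
    (hV : IsOpen V) (hc : ContDiffOn ℝ k c V) (hK : IsCompact K) (hKV : K ⊆ V) :
    ∃ C : E → F, ContDiff ℝ k C ∧ C =ᶠ[𝓝ˢ K] c := by
  obtain ⟨M, hM, hKM, hMV⟩ := exists_compact_between hK hV hKV
  obtain ⟨χ, hχ1, hχ0, -⟩ :=
    exists_contMDiffMap_one_nhds_of_subset_interior 𝓘(ℝ, E) (n := k) hK.isClosed hKM
  have hχ : ContDiff ℝ k χ := contMDiff_iff_contDiff.mp χ.contMDiff
  refine ⟨fun x => χ x • c x, contDiff_iff_contDiffAt.2 fun x => ?_,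
    hχ1.mono fun x hx => by simp [hx]⟩
  by_cases hx : x ∈ V
  · exact hχ.contDiffAt.smul (hc.contDiffAt (hV.mem_nhds hx))
  · refine (contDiffAt_const (c := (0 : F))).congr_of_eventuallyEq ?_
    filter_upwards [hM.isClosed.isOpen_compl.mem_nhds fun h => hx (hMV h)] with y hy
    simp [hχ0 y hy]

end Localization

section PartialDerivatives

variable {n : ℕ} {f g : EuclideanSpace ℝ (Fin n) → ℝ} {x : EuclideanSpace ℝ (Fin n)}

theorem Filter.EventuallyEq.pd (h : f =ᶠ[𝓝 x] g) (l : Fin n) : pd l f =ᶠ[𝓝 x] pd l g :=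
  (h.fderiv (𝕜 := ℝ)).mono fun y hy => by simp only [_root_.pd, hy]

theorem Filter.EventuallyEq.lap_eq (h : f =ᶠ[𝓝 x] g) : lap f x = lap g x :=
  Finset.sum_congr rfl fun l _ => ((h.pd l).pd l).eq_of_nhds

theorem ContDiff.contDiff_pd {m k : WithTop ℕ∞} (hf : ContDiff ℝ m f) (hkm : k + 1 ≤ m)
    (l : Fin n) : ContDiff ℝ k (pd l f) :=
  (hf.fderiv_right hkm).clm_apply contDiff_const

theorem HasCompactSupport.pd (hf : HasCompactSupport f) (l : Fin n) :
    HasCompactSupport (pd l f) :=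
  hf.fderiv_apply (𝕜 := ℝ) _

theorem pd_mul (hf : DifferentiableAt ℝ f x) (hg : DifferentiableAt ℝ g x) (l : Fin n) :
    pd l (fun y => f y * g y) x = f x * pd l g x + g x * pd l f x := by
  simp [_root_.pd, fderiv_fun_mul hf hg]

theorem norm_sq_eq_sum_sq_apply_single (A : EuclideanSpace ℝ (Fin n) →L[ℝ] ℝ) :
    ‖A‖ ^ 2 = ∑ l, A (EuclideanSpace.single l 1) ^ 2 := by
  set a := (InnerProductSpace.toDual ℝ _).symm A
  have hA : ∀ l, A (EuclideanSpace.single l 1) = a l := fun l => by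
    rw [← InnerProductSpace.toDual_symm_apply, real_inner_comm, EuclideanSpace.inner_single_left]
    simp [a]
  rw [← (InnerProductSpace.toDual ℝ _).symm.norm_map A, EuclideanSpace.norm_sq_eq]
  simp [hA, a]

theorem norm_fderiv_sq_eq_sum_sq_pd : ‖fderiv ℝ f x‖ ^ 2 = ∑ l, pd l f x ^ 2 :=
  norm_sq_eq_sum_sq_apply_single _

end PartialDerivatives

section Integrability

theorem HasCompactSupport.pow {X M : Type*} [TopologicalSpace X] [MonoidWithZero M] {g : X → M}
    (hg : HasCompactSupport g) {k : ℕ} (hk : k ≠ 0) : HasCompactSupport fun x => g x ^ k :=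
  hg.comp_left (g := fun t => t ^ k) (zero_pow hk)

theorem tsupport_pow_subset {X M : Type*} [TopologicalSpace X] [MonoidWithZero M] {g : X → M}
    {k : ℕ} (hk : k ≠ 0) : tsupport (fun x => g x ^ k) ⊆ tsupport g :=
  tsupport_comp_subset (g := fun t => t ^ k) (zero_pow hk) g

variable {X : Type*} [TopologicalSpace X] [MeasurableSpace X] [OpensMeasurableSpace X]
  {μ : Measure X} [IsFiniteMeasureOnCompacts μ]

theorem ContinuousOn.integrable_mul_of_hasCompactSupport {W g : X → ℝ} {Ω : Set X}
    (hW : ContinuousOn W Ω) (hΩ : IsOpen Ω) (hg : Continuous g) (hgc : HasCompactSupport g)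
    (hgΩ : tsupport g ⊆ Ω) : Integrable (fun x => W x * g x) μ :=
  ((hW.mul hg.continuousOn).continuous_of_tsupport_subset hΩ
    (tsupport_mul_subset_right.trans hgΩ)).integrable_of_hasCompactSupport hgc.mul_left

theorem ContDiff.integrable_norm_fderiv_sq {E : Type*} [NormedAddCommGroup E] [NormedSpace ℝ E]
    [MeasurableSpace E] [BorelSpace E] {μ : Measure E} [IsFiniteMeasureOnCompacts μ] {ξ : E → ℝ}
    (hξ : ContDiff ℝ 1 ξ) (hξc : HasCompactSupport ξ) :
    Integrable (fun x => ‖fderiv ℝ ξ x‖ ^ 2) μ :=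
  ((hξ.continuous_fderiv one_ne_zero).norm.pow 2).integrable_of_hasCompactSupport
    ((hξc.fderiv (𝕜 := ℝ)).norm.pow two_ne_zero)

end Integrability

section Green

variable {n : ℕ} {f C η : EuclideanSpace ℝ (Fin n) → ℝ} {x : EuclideanSpace ℝ (Fin n)}

theorem ContDiff.continuous_pd (hf : ContDiff ℝ 1 f) (l : Fin n) : Continuous (pd l f) :=
  (hf.continuous_fderiv one_ne_zero).clm_apply continuous_const

theorem ContDiff.continuous_lap (hC : ContDiff ℝ 2 C) : Continuous (lap C) :=
  continuous_finsetSum _ fun l _ => (hC.contDiff_pd (by norm_num) l).continuous_pd l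

theorem integral_mul_lap (hf : ContDiff ℝ 1 f) (hfc : HasCompactSupport f)
    (hC : ContDiff ℝ 2 C) :
    ∫ x, f x * lap C x = -∫ x, ∑ l, pd l f x * pd l C x := by
  have hC' : ∀ l, ContDiff ℝ 1 (pd l C) := fun l => hC.contDiff_pd (by norm_num) l
  have hcross : ∀ l, Integrable fun x => pd l f x * pd l C x := fun l =>
    ((hf.continuous_pd l).mul (hC' l).continuous).integrable_of_hasCompactSupport
      (hfc.pd l).mul_right
  have hsecond : ∀ l, Integrable fun x => f x * pd l (pd l C) x := fun l =>
    (hf.continuous.mul ((hC' l).continuous_pd l)).integrable_of_hasCompactSupport hfc.mul_right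
  have hparts : ∀ l, ∫ x, f x * pd l (pd l C) x = -∫ x, pd l f x * pd l C x := fun l =>
    integral_mul_fderiv_eq_neg_fderiv_mul_of_integrable (hcross l) (hsecond l)
      ((hf.continuous.mul (hC' l).continuous).integrable_of_hasCompactSupport hfc.mul_right)
      (fun x _ => hf.differentiable one_ne_zero x)
      (fun x _ => (hC' l).differentiable one_ne_zero x)
  simp only [lap, Finset.mul_sum]
  rw [integral_finsetSum _ fun l _ => hsecond l, integral_finsetSum _ fun l _ => hcross l,
    ← Finset.sum_neg_distrib]
  exact Finset.sum_congr rfl fun l _ => hparts l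

theorem norm_fderiv_mul_sq (hC : DifferentiableAt ℝ C x) (hη : DifferentiableAt ℝ η x) :
    ‖fderiv ℝ (fun y => C y * η y) x‖ ^ 2
      = ∑ l, pd l (fun y => C y * η y ^ 2) x * pd l C x + C x ^ 2 * ‖fderiv ℝ η x‖ ^ 2 := by
  have hsq : (fun y => C y * η y ^ 2) = fun y => C y * (η y * η y) := by simp only [sq]
  simp only [norm_fderiv_sq_eq_sum_sq_pd, Finset.mul_sum, ← Finset.sum_add_distrib, hsq]
  refine Finset.sum_congr rfl fun l _ => ?_
  rw [pd_mul hC hη, pd_mul hC (hη.fun_mul hη), pd_mul hη hη]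
  ring

end Green

section Stability

variable {n : ℕ}

def IsSemiStable (Ω : Set (EuclideanSpace ℝ (Fin n))) (W : EuclideanSpace ℝ (Fin n) → ℝ) :
    Prop :=
  ∀ ξ : EuclideanSpace ℝ (Fin n) → ℝ, ContDiff ℝ 1 ξ → HasCompactSupport ξ →
    tsupport ξ ⊆ Ω → 0 ≤ ∫ x in Ω, (‖fderiv ℝ ξ x‖ ^ 2 - W x * ξ x ^ 2)

variable {Ω : Set (EuclideanSpace ℝ (Fin n))} {W : EuclideanSpace ℝ (Fin n) → ℝ}

theorem IsSemiStable.integral_mul_sq_le (hstab : IsSemiStable Ω W) (hΩ : IsOpen Ω)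
    (hW : ContinuousOn W Ω) {ξ : EuclideanSpace ℝ (Fin n) → ℝ} (hξ : ContDiff ℝ 1 ξ)
    (hξc : HasCompactSupport ξ) (hξΩ : tsupport ξ ⊆ Ω) :
    ∫ x, W x * ξ x ^ 2 ≤ ∫ x, ‖fderiv ℝ ξ x‖ ^ 2 := by
  have hpot : Integrable fun x => W x * ξ x ^ 2 :=
    hW.integrable_mul_of_hasCompactSupport hΩ (hξ.continuous.pow 2) (hξc.pow two_ne_zero)
      ((tsupport_pow_subset two_ne_zero).trans hξΩ)
  have h := hstab ξ hξ hξc hξΩ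
  rw [setIntegral_eq_integral_of_forall_compl_eq_zero,
    integral_sub (hξ.integrable_norm_fderiv_sq hξc) hpot] at h
  · linarith
  · intro x hx
    have hxξ : x ∉ tsupport ξ := fun h => hx (hξΩ h)
    simp [image_eq_zero_of_notMem_tsupport hxξ, fderiv_of_notMem_tsupport ℝ hxξ]

theorem IsSemiStable.integral_mul_lap_add_le (hstab : IsSemiStable Ω W) (hΩ : IsOpen Ω)
    (hW : ContinuousOn W Ω) {C η : EuclideanSpace ℝ (Fin n) → ℝ} (hC : ContDiff ℝ 2 C)
    (hη : ContDiff ℝ 1 η) (hηc : HasCompactSupport η) (hηΩ : tsupport η ⊆ Ω) :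
    ∫ x, C x * (lap C x + W x * C x) * η x ^ 2 ≤ ∫ x, C x ^ 2 * ‖fderiv ℝ η x‖ ^ 2 := by
  have hC1 : ContDiff ℝ 1 C := hC.of_le one_le_two
  have hf : ContDiff ℝ 1 fun x => C x * η x ^ 2 := hC1.mul (hη.pow 2)
  have hfc : HasCompactSupport fun x => C x * η x ^ 2 := (hηc.pow two_ne_zero).mul_left
  set ξ := fun x => C x * η x
  have hξ : ContDiff ℝ 1 ξ := hC1.mul hη
  have hξc : HasCompactSupport ξ := hηc.mul_left
  have hξΩ : tsupport ξ ⊆ Ω := tsupport_mul_subset_right.trans hηΩ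
  have hgradη : Integrable fun x => C x ^ 2 * ‖fderiv ℝ η x‖ ^ 2 :=
    ((hC.continuous.pow 2).mul ((hη.continuous_fderiv one_ne_zero).norm.pow 2))
      |>.integrable_of_hasCompactSupport ((hηc.fderiv (𝕜 := ℝ)).norm.pow two_ne_zero).mul_left
  have hlap : Integrable fun x => C x * η x ^ 2 * lap C x :=
    (hf.continuous.mul hC.continuous_lap).integrable_of_hasCompactSupport hfc.mul_right
  have hpot : Integrable fun x => W x * ξ x ^ 2 :=
    hW.integrable_mul_of_hasCompactSupport hΩ (hξ.continuous.pow 2) (hξc.pow two_ne_zero)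
      ((tsupport_pow_subset two_ne_zero).trans hξΩ)
  have hsplit : ∫ x, C x * (lap C x + W x * C x) * η x ^ 2
      = (∫ x, C x * η x ^ 2 * lap C x) + ∫ x, W x * ξ x ^ 2 := by
    rw [← integral_add hlap hpot]
    congr 1 with x
    ring
  have henergy : ∫ x, ∑ l, pd l (fun y => C y * η y ^ 2) x * pd l C x
      = (∫ x, ‖fderiv ℝ ξ x‖ ^ 2) - ∫ x, C x ^ 2 * ‖fderiv ℝ η x‖ ^ 2 := by
    rw [← integral_sub (hξ.integrable_norm_fderiv_sq hξc) hgradη]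
    congr 1 with x
    rw [norm_fderiv_mul_sq (hC1.differentiable one_ne_zero x) (hη.differentiable one_ne_zero x)]
    ring
  have hgreen := integral_mul_lap hf hfc hC
  beta_reduce at hgreen
  linarith [hstab.integral_mul_sq_le hΩ hW hξ hξc hξΩ]

end Stability

/-- Lemma 2.2 of the paper: if the quadratic form
`ξ ↦ ∫_Ω (|∇ξ|² − W ξ²)` is nonnegative on `C¹` functions compactly supported in `Ω`, then for
every open `V ⊆ Ω`, every `C²` function `c` on `V` and every `C¹` function `η` compactly
supported in `V`, `∫_V c (Δc + W c) η² ≤ ∫_V c² |∇η|²`. -/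
theorem stability_inequality_test {n : ℕ} (Ω : Set (EuclideanSpace ℝ (Fin n))) (hΩ : IsOpen Ω)
    (W : EuclideanSpace ℝ (Fin n) → ℝ) (hW : ContinuousOn W Ω)
    (hstab : ∀ ξ : EuclideanSpace ℝ (Fin n) → ℝ, ContDiff ℝ 1 ξ → HasCompactSupport ξ →
      tsupport ξ ⊆ Ω → 0 ≤ ∫ x in Ω, (‖fderiv ℝ ξ x‖ ^ 2 - W x * ξ x ^ 2))
    (V : Set (EuclideanSpace ℝ (Fin n))) (hV : IsOpen V) (hVΩ : V ⊆ Ω)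
    (c : EuclideanSpace ℝ (Fin n) → ℝ) (hc : ContDiffOn ℝ 2 c V)
    (η : EuclideanSpace ℝ (Fin n) → ℝ) (hη : ContDiff ℝ 1 η) (hηc : HasCompactSupport η)
    (hηV : tsupport η ⊆ V) :
    ∫ x in V, c x * (lap c x + W x * c x) * η x ^ 2 ≤ ∫ x in V, c x ^ 2 * ‖fderiv ℝ η x‖ ^ 2 := by
  obtain ⟨C, hC, hCc⟩ := exists_contDiff_eventuallyEq_nhdsSet (k := 2) hV hc hηc hηV
  have hnear : ∀ x ∈ tsupport η, C =ᶠ[𝓝 x] c := fun x hx => hCc.filter_mono (nhds_le_nhdsSet hx)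
  have hlhs : (fun x => c x * (lap c x + W x * c x) * η x ^ 2)
      = fun x => C x * (lap C x + W x * C x) * η x ^ 2 := by
    funext x
    by_cases hx : x ∈ tsupport η
    · rw [(hnear x hx).eq_of_nhds, (hnear x hx).lap_eq]
    · simp [image_eq_zero_of_notMem_tsupport hx]
  have hrhs : (fun x => c x ^ 2 * ‖fderiv ℝ η x‖ ^ 2)
      = fun x => C x ^ 2 * ‖fderiv ℝ η x‖ ^ 2 := by
    funext x
    by_cases hx : x ∈ tsupport η
    · rw [(hnear x hx).eq_of_nhds]
    · simp [fderiv_of_notMem_tsupport ℝ hx]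
  rw [hlhs, hrhs, setIntegral_eq_integral_of_forall_compl_eq_zero,
    setIntegral_eq_integral_of_forall_compl_eq_zero]
  · exact IsSemiStable.integral_mul_lap_add_le hstab hΩ hW hC hη hηc (hηV.trans hVΩ)
  · intro x hx
    simp [fderiv_of_notMem_tsupport ℝ fun h => hx (hηV h)]
  · intro x hx
    simp [image_eq_zero_of_notMem_tsupport fun h => hx (hηV h)]
end

section
/- Let $n\ge 2$ and $2\le m\le n$ be integers, let $\Omega\subset\mathbb{R}^n$ be a bounded open set, let $S=\{x\in\mathbb{R}^n: x_1=\cdots=x_m=0\}$, and write $s(x)=\sqrt{x_1^2+\cdots+x_m^2}$. Let $w:\overline\Omega\to\mathbb{R}$ be a Lipschitz function vanishing on $S\cap\overline\Omega$. Assume that $(m-1)\int_\Omega \frac{w^2\,\eta^2}{s^2}\,dx\ \le\ \int_\Omega w^2\,|\nabla\eta|^2\,dx$ holds for every Lipschitz function $\eta$ with compact support contained in $\Omega\setminus S$. Then the same inequality $(m-1)\int_\Omega \frac{w^2\,\eta^2}{s^2}\,dx\le\int_\Omega w^2\,|\nabla\eta|^2\,dx$ holds for every Lipschitz function $\eta$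 with compact support contained in $\Omega$. -/
/-!
Multiply `η` by `ζ_δ = cutoff δ ∘ s`, which vanishes where `s ≤ δ` and equals `1` where `s ≥ 2δ`;
the hypothesis applies to `η ζ_δ`. As `δ ↓ 0` the left-hand side for `η ζ_δ` increases to the one
for `η` (monotone convergence). The right-hand side for `η ζ_δ` exceeds the one for `η` only on
`supp η ∩ {s ≤ 2δ}`, where `|∇(η ζ_δ)| = O(1/δ)`, where `w²` is uniformly small because `w` is
continuous and vanishes on `S`, and which has volume `O(δ²)` because `m ≥ 2`.
-/

open MeasureTheory Set Filter Topology
open scoped NNReal ENNReal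

theorem LipschitzWith.mul_of_norm_le {α R : Type*} [PseudoMetricSpace α] [SeminormedRing R]
    {f g : α → R} {Kf Kg A B : ℝ≥0} (hf : LipschitzWith Kf f) (hg : LipschitzWith Kg g)
    (hfA : ∀ x, ‖f x‖ ≤ A) (hgB : ∀ x, ‖g x‖ ≤ B) :
    LipschitzWith (A * Kg + B * Kf) fun x => f x * g x := by
  refine LipschitzWith.of_dist_le_mul fun x y => ?_
  have hf' := hf.dist_le_mul x y
  have hg' := hg.dist_le_mul x y
  rw [dist_eq_norm] at hf' hg' ⊢
  calc ‖f x * g x - f y * g y‖ = ‖f x * (g x - g y) + (f x - f y) * g y‖ := by noncomm_ring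
    _ ≤ ‖f x‖ * ‖g x - g y‖ + ‖f x - f y‖ * ‖g y‖ :=
      (norm_add_le _ _).trans (add_le_add (norm_mul_le _ _) (norm_mul_le _ _))
    _ ≤ A * (Kg * dist x y) + Kf * dist x y * B := by gcongr <;> simp only [hfA, hgB]
    _ = ↑(A * Kg + B * Kf) * dist x y := by push_cast; ring

theorem IsCompact.exists_pos_forall_le_of_continuousOn {X : Type*} [TopologicalSpace X]
    [T2Space X] {K : Set X} (hK : IsCompact K) {f s : X → ℝ} (hf : ContinuousOn f K)
    (hs : ContinuousOn s K) (hfs : ∀ x ∈ K, s x ≤ 0 → f x ≤ 0) {ε : ℝ} (hε : 0 < ε) :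
    ∃ δ > 0, ∀ x ∈ K, s x ≤ δ → f x ≤ ε := by
  set C := K ∩ f ⁻¹' Ici ε
  have hC : IsCompact C :=
    hK.of_isClosed_subset (hf.preimage_isClosed_of_isClosed hK.isClosed isClosed_Ici)
      inter_subset_left
  rcases C.eq_empty_or_nonempty with hC₀ | hC₀
  · refine ⟨1, one_pos, fun x hx _ => le_of_not_ge fun hfx => ?_⟩
    exact hC₀.subset ⟨hx, hfx⟩
  obtain ⟨x₀, ⟨hx₀K, hx₀f⟩, hmin⟩ := hC.exists_isMinOn hC₀ (hs.mono inter_subset_left)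
  have hx₀s : 0 < s x₀ := lt_of_not_ge fun h => (hfs x₀ hx₀K h).not_gt (hε.trans_le hx₀f)
  refine ⟨s x₀ / 2, half_pos hx₀s, fun x hx hsx => le_of_not_ge fun hfx => ?_⟩
  have : s x₀ ≤ s x := hmin ⟨hx, hfx⟩
  linarith

theorem ENNReal.le_of_forall_pos_le_add_ofReal_mul {a b M : ℝ≥0∞} (hM : M ≠ ∞)
    (h : ∀ ε > 0, a ≤ b + ENNReal.ofReal ε * M) : a ≤ b := by
  have hlim : Tendsto (fun ε => b + ENNReal.ofReal ε * M) (𝓝[>] 0)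
      (𝓝 (b + ENNReal.ofReal 0 * M)) :=
    tendsto_const_nhds.add (ENNReal.Tendsto.mul_const
      (ENNReal.tendsto_ofReal (tendsto_nhdsWithin_of_tendsto_nhds tendsto_id)) (Or.inr hM))
  rw [ENNReal.ofReal_zero, zero_mul, add_zero] at hlim
  exact ge_of_tendsto hlim (eventually_nhdsWithin_of_forall fun ε hε => h ε hε)

noncomputable def cutoff (δ t : ℝ) : ℝ := min 1 (max 0 (t / δ - 1))

theorem cutoff_nonneg (δ t : ℝ) : 0 ≤ cutoff δ t := le_min zero_le_one (le_max_left _ _)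

theorem cutoff_le_one (δ t : ℝ) : cutoff δ t ≤ 1 := min_le_left _ _

theorem cutoff_eq_zero {δ t : ℝ} (hδ : 0 < δ) (ht : t ≤ δ) : cutoff δ t = 0 := by
  have : t / δ ≤ 1 := (div_le_one hδ).2 ht
  simp [cutoff, max_eq_left (by linarith : t / δ - 1 ≤ 0)]

theorem cutoff_eq_one {δ t : ℝ} (hδ : 0 < δ) (ht : 2 * δ ≤ t) : cutoff δ t = 1 := by
  have : 2 ≤ t / δ := (le_div_iff₀ hδ).2 ht
  rw [cutoff, max_eq_right (by linarith), min_eq_left (by linarith)]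

theorem cutoff_le_cutoff_of_le {δ δ' : ℝ} (hδ' : 0 < δ') (h : δ' ≤ δ) (t : ℝ) :
    cutoff δ t ≤ cutoff δ' t := by
  rcases le_total t 0 with ht | ht
  · rw [cutoff_eq_zero (hδ'.trans_le h) (ht.trans (hδ'.le.trans h))]
    exact cutoff_nonneg _ _
  · unfold cutoff
    gcongr

theorem lipschitzWith_cutoff (δ : ℝ) : LipschitzWith ‖δ⁻¹‖₊ (cutoff δ) := by
  have : LipschitzWith ‖δ⁻¹‖₊ fun t : ℝ => t / δ - 1 := by
    refine LipschitzWith.of_dist_le_mul fun t u => ?_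
    rw [Real.dist_eq, Real.dist_eq, coe_nnnorm, Real.norm_eq_abs, ← abs_mul]
    exact le_of_eq (by ring_nf)
  exact (this.const_max 0).const_min 1

theorem iSup_lintegral_ofReal_cutoff_sq_mul {X : Type*} [MeasurableSpace X] {μ : Measure X}
    {s : X → ℝ} (hs : Measurable s) {f : X → ℝ≥0∞} (hf : AEMeasurable f μ)
    (hf₀ : ∀ x, s x ≤ 0 → f x = 0) {δ : ℝ} (hδ : 0 < δ) :
    ⨆ k : ℕ, ∫⁻ x, ENNReal.ofReal (cutoff (δ / (k + 1)) (s x) ^ 2) * f x ∂μ = ∫⁻ x, f x ∂μ := by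
  have hmeas (k : ℕ) :
      AEMeasurable (fun x => ENNReal.ofReal (cutoff (δ / (k + 1)) (s x) ^ 2) * f x) μ :=
    (ENNReal.measurable_ofReal.comp
      (((lipschitzWith_cutoff _).continuous.measurable.comp hs).pow_const 2)).aemeasurable.mul hf
  have hmono (x : X) :
      Monotone fun k : ℕ => ENNReal.ofReal (cutoff (δ / (k + 1)) (s x) ^ 2) * f x := by
    intro k k' hk
    dsimp only
    gcongr ENNReal.ofReal (?_ ^ 2) * _
    · exact cutoff_nonneg _ _
    · exact cutoff_le_cutoff_of_le (by positivity) (by gcongr) _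
  rw [← lintegral_iSup' hmeas (ae_of_all _ hmono)]
  congr 1 with x
  rcases le_or_gt (s x) 0 with hx | hx
  · simp [hf₀ x hx]
  refine le_antisymm (iSup_le fun k => ?_) ?_
  · calc ENNReal.ofReal (cutoff (δ / (k + 1)) (s x) ^ 2) * f x ≤ ENNReal.ofReal (1 ^ 2) * f x := by
          gcongr
          exacts [cutoff_nonneg _ _, cutoff_le_one _ _]
      _ = f x := by simp
  · obtain ⟨k, hk⟩ := exists_nat_gt (2 * δ / s x)
    refine le_iSup_of_le k (le_of_eq ?_)
    rw [cutoff_eq_one (by positivity), one_pow, ENNReal.ofReal_one, one_mul]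
    rw [div_lt_iff₀ hx] at hk
    rw [mul_div_assoc', div_le_iff₀ (by positivity)]
    nlinarith

section Cutoff

variable {E : Type*} {η s : E → ℝ} {δ : ℝ}

theorem LipschitzWith.mul_cutoff [PseudoMetricSpace E] {L C K : ℝ≥0} (hη : LipschitzWith L η)
    (hC : ∀ x, |η x| ≤ C) (hs : LipschitzWith K s) (δ : ℝ) :
    LipschitzWith (C * (‖δ⁻¹‖₊ * K) + 1 * L) fun x => η x * cutoff δ (s x) :=
  hη.mul_of_norm_le ((lipschitzWith_cutoff δ).comp hs) (by simpa using hC) fun x => by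
    simpa [abs_of_nonneg (cutoff_nonneg _ _)] using cutoff_le_one δ (s x)

theorem tsupport_mul_cutoff_subset [TopologicalSpace E] (hs : Continuous s) (hδ : 0 < δ) :
    tsupport (fun x => η x * cutoff δ (s x)) ⊆ tsupport η ∩ {x | δ ≤ s x} := by
  refine closure_minimal (fun x hx => ⟨subset_tsupport η (left_ne_zero_of_mul hx), ?_⟩)
    ((isClosed_tsupport η).inter (isClosed_le continuous_const hs))
  exact le_of_not_gt fun h => right_ne_zero_of_mul hx (cutoff_eq_zero hδ h.le)

theorem fderiv_mul_cutoff_of_two_mul_lt [NormedAddCommGroup E] [NormedSpace ℝ E]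
    (hs : Continuous s) (hδ : 0 < δ) {x : E} (hx : 2 * δ < s x) :
    fderiv ℝ (fun y => η y * cutoff δ (s y)) x = fderiv ℝ η x := by
  refine Filter.EventuallyEq.fderiv_eq ?_
  filter_upwards [(isOpen_lt continuous_const hs).mem_nhds hx] with y hy
  rw [cutoff_eq_one hδ (le_of_lt hy), mul_one]

theorem ofReal_sq_mul_norm_fderiv_mul_cutoff_le [NormedAddCommGroup E] [NormedSpace ℝ E]
    {w : E → ℝ} {L C : ℝ≥0} {ε : ℝ} (hη : LipschitzWith L η) (hC : ∀ x, |η x| ≤ C)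
    (hs : LipschitzWith 1 s) (hδ : 0 < δ) (hw : ∀ x ∈ tsupport η, s x ≤ 2 * δ → w x ^ 2 ≤ ε)
    (x : E) :
    ENNReal.ofReal (w x ^ 2 * ‖fderiv ℝ (fun y => η y * cutoff δ (s y)) x‖ ^ 2)
      ≤ ENNReal.ofReal (w x ^ 2 * ‖fderiv ℝ η x‖ ^ 2)
        + (tsupport η ∩ {x | s x ≤ 2 * δ}).indicator
          (fun _ => ENNReal.ofReal (ε * (C * δ⁻¹ + L) ^ 2)) x := by
  by_cases hxη : x ∈ tsupport η
  · rcases le_or_gt (s x) (2 * δ) with hxs | hxs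
    · rw [indicator_of_mem (show x ∈ tsupport η ∩ {x | s x ≤ 2 * δ} from ⟨hxη, hxs⟩)]
      have hφ : ‖fderiv ℝ (fun y => η y * cutoff δ (s y)) x‖ ≤ C * δ⁻¹ + L := by
        simpa [abs_of_pos hδ] using norm_fderiv_le_of_lipschitz ℝ (hη.mul_cutoff hC hs δ)
      refine le_trans (ENNReal.ofReal_le_ofReal ?_) ENNReal.ofReal_add_le
      refine le_add_of_nonneg_of_le (by positivity) (mul_le_mul (hw x hxη hxs) ?_ (by positivity)
        ((sq_nonneg _).trans (hw x hxη hxs)))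
      exact pow_le_pow_left₀ (norm_nonneg _) hφ 2
    · rw [fderiv_mul_cutoff_of_two_mul_lt hs.continuous hδ hxs]
      exact le_self_add
  · have : fderiv ℝ (fun y => η y * cutoff δ (s y)) x = 0 := by
      by_contra h
      exact hxη (tsupport_mul_cutoff_subset hs.continuous hδ (support_fderiv_subset ℝ h)).1
    simp [this]

end Cutoff

section SingDist

variable {n : ℕ}

def coordProj (m : ℕ) : EuclideanSpace ℝ (Fin n) →ₗ[ℝ] EuclideanSpace ℝ (Fin n) where
  toFun x := WithLp.toLp 2 fun l => if (l : ℕ) < m then x l else 0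
  map_add' x y := by ext l; by_cases h : (l : ℕ) < m <;> simp [h]
  map_smul' c x := by ext l; by_cases h : (l : ℕ) < m <;> simp [h]

@[simp]
theorem coordProj_apply (m : ℕ) (x : EuclideanSpace ℝ (Fin n)) (l : Fin n) :
    coordProj m x l = if (l : ℕ) < m then x l else 0 := rfl

theorem norm_coordProj_le (m : ℕ) (x : EuclideanSpace ℝ (Fin n)) : ‖coordProj m x‖ ≤ ‖x‖ := by
  rw [EuclideanSpace.norm_eq, EuclideanSpace.norm_eq]
  gcongr with l
  rw [coordProj_apply]
  split_ifs <;> simp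

/-- The paper's `s(x)`: the distance from `x` to `S = {x₁ = ⋯ = x_m = 0}`. -/
noncomputable def singDist (m : ℕ) (x : EuclideanSpace ℝ (Fin n)) : ℝ := ‖coordProj m x‖

theorem singDist_sq (m : ℕ) (x : EuclideanSpace ℝ (Fin n)) :
    singDist m x ^ 2 = ∑ l : Fin n, if (l : ℕ) < m then x l ^ 2 else 0 := by
  rw [singDist, EuclideanSpace.norm_sq_eq]
  congr 1 with l
  by_cases h : (l : ℕ) < m <;> simp [h]

theorem singDist_eq_zero {m : ℕ} {x : EuclideanSpace ℝ (Fin n)} :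
    singDist m x = 0 ↔ ∀ l : Fin n, (l : ℕ) < m → x l = 0 := by
  simp only [singDist, norm_eq_zero, PiLp.ext_iff, coordProj_apply, PiLp.zero_apply]
  exact forall_congr' fun l => by by_cases h : (l : ℕ) < m <;> simp [h, eq_comm]

theorem lipschitzWith_singDist (m : ℕ) : LipschitzWith 1 (singDist (n := n) m) := by
  have := AddMonoidHomClass.lipschitz_of_bound_nnnorm (coordProj (n := n) m) 1
    fun x => by
      rw [one_mul, ← NNReal.coe_le_coe, coe_nnnorm, coe_nnnorm]
      exact norm_coordProj_le m x
  exact (mul_one (1 : ℝ≥0)) ▸ lipschitzWith_one_norm.comp this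

theorem abs_apply_le_singDist {m : ℕ} (x : EuclideanSpace ℝ (Fin n)) {l : Fin n}
    (hl : (l : ℕ) < m) : |x l| ≤ singDist m x := by
  simpa [singDist, hl] using PiLp.norm_apply_le (coordProj m x) l

theorem volume_setOf_singDist_le_inter_closedBall_le {m : ℕ} (hm : 2 ≤ m) (hn : 2 ≤ n)
    (r R : ℝ) :
    volume ({x : EuclideanSpace ℝ (Fin n) | singDist m x ≤ r} ∩ Metric.closedBall 0 R)
      ≤ ENNReal.ofReal (2 * r) ^ 2 * ENNReal.ofReal (2 * R) ^ (n - 2) := by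
  obtain ⟨k, rfl⟩ : ∃ k, n = k + 2 := ⟨n - 2, by omega⟩
  set c : Fin (k + 2) → ℝ := fun l => if (l : ℕ) < 2 then r else R
  have hsub : {x : EuclideanSpace ℝ (Fin (k + 2)) | singDist m x ≤ r} ∩ Metric.closedBall 0 R
      ⊆ (MeasurableEquiv.toLp 2 (Fin (k + 2) → ℝ)).symm ⁻¹' univ.pi fun l => Icc (-c l) (c l) := by
    rintro x ⟨hxr, hxR⟩ l -
    change x l ∈ Icc (-c l) (c l)
    rw [mem_Icc, ← abs_le]
    by_cases hl : (l : ℕ) < 2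
    · simpa only [c, if_pos hl] using (abs_apply_le_singDist x (hl.trans_le hm)).trans hxr
    · simpa only [c, if_neg hl, Real.norm_eq_abs] using
        (PiLp.norm_apply_le x l).trans (mem_closedBall_zero_iff.1 hxR)
  calc _ ≤ volume ((MeasurableEquiv.toLp 2 (Fin (k + 2) → ℝ)).symm ⁻¹'
          univ.pi fun l => Icc (-c l) (c l)) := measure_mono hsub
    _ = ∏ l, ENNReal.ofReal (2 * c l) := by
      rw [(EuclideanSpace.volume_preserving_symm_measurableEquiv_toLp _).measure_preimage
        (MeasurableSet.univ_pi fun _ => measurableSet_Icc).nullMeasurableSet, volume_pi_pi]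
      simp only [Real.volume_Icc, sub_neg_eq_add, two_mul]
    _ = _ := by simp [Fin.prod_univ_succ, c, pow_two, mul_assoc]

theorem IsCompact.exists_pos_sq_le_of_singDist_le {m : ℕ} {K : Set (EuclideanSpace ℝ (Fin n))}
    (hK : IsCompact K) {w : EuclideanSpace ℝ (Fin n) → ℝ} (hw : ContinuousOn w K)
    (hw₀ : ∀ x ∈ K, (∀ l : Fin n, (l : ℕ) < m → x l = 0) → w x = 0) {ε : ℝ} (hε : 0 < ε) :
    ∃ δ > 0, ∀ x ∈ K, singDist m x ≤ δ → w x ^ 2 ≤ ε :=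
  hK.exists_pos_forall_le_of_continuousOn (hw.pow 2)
    (lipschitzWith_singDist m).continuous.continuousOn
    (fun x hx hx₀ => by
      simp [hw₀ x hx (singDist_eq_zero.1 (hx₀.antisymm (norm_nonneg _)))]) hε

theorem tsupport_mul_cutoff_singDist_subset {m : ℕ} {Ω : Set (EuclideanSpace ℝ (Fin n))}
    {η : EuclideanSpace ℝ (Fin n) → ℝ} (hηΩ : tsupport η ⊆ Ω) {δ : ℝ} (hδ : 0 < δ) :
    tsupport (fun x => η x * cutoff δ (singDist m x))
      ⊆ Ω \ {x | ∀ l : Fin n, (l : ℕ) < m → x l = 0} := fun x hx => by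
  obtain ⟨hxη, hxδ⟩ := tsupport_mul_cutoff_subset (lipschitzWith_singDist m).continuous hδ hx
  exact ⟨hηΩ hxη, fun hxS => hδ.not_ge (hxδ.trans (singDist_eq_zero.2 hxS).le)⟩

theorem lintegral_sq_mul_norm_fderiv_mul_cutoff_le {m : ℕ} (hm : 2 ≤ m) (hn : 2 ≤ n)
    (Ω : Set (EuclideanSpace ℝ (Fin n))) {w η : EuclideanSpace ℝ (Fin n) → ℝ} {L C : ℝ≥0}
    {R δ ε : ℝ} (hη : LipschitzWith L η) (hC : ∀ x, |η x| ≤ C)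
    (hR : tsupport η ⊆ Metric.closedBall 0 R) (hδ : 0 < δ) (hδ₁ : δ ≤ 1)
    (hw : ∀ x ∈ tsupport η, singDist m x ≤ 2 * δ → w x ^ 2 ≤ ε) :
    ∫⁻ x in Ω, ENNReal.ofReal
        (w x ^ 2 * ‖fderiv ℝ (fun y => η y * cutoff δ (singDist m y)) x‖ ^ 2)
      ≤ (∫⁻ x in Ω, ENNReal.ofReal (w x ^ 2 * ‖fderiv ℝ η x‖ ^ 2))
        + ENNReal.ofReal ε *
          (ENNReal.ofReal ((4 * (C + L)) ^ 2) * ENNReal.ofReal (2 * R) ^ (n - 2)) := by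
  set T := tsupport η ∩ {x | singDist m x ≤ 2 * δ}
  set c := ENNReal.ofReal (ε * (C * δ⁻¹ + L) ^ 2) with hc
  have hs := lipschitzWith_singDist (n := n) m
  have hT : MeasurableSet T :=
    ((isClosed_tsupport η).inter (isClosed_le hs.continuous continuous_const)).measurableSet
  have hTR : T ⊆ {x | singDist m x ≤ 2 * δ} ∩ Metric.closedBall 0 R := fun x hx => ⟨hx.2, hR hx.1⟩
  have hvol : c * volume T ≤ ENNReal.ofReal ε *
      (ENNReal.ofReal ((4 * (C + L)) ^ 2) * ENNReal.ofReal (2 * R) ^ (n - 2)) := by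
    calc c * volume T ≤ ENNReal.ofReal ε * ENNReal.ofReal ((C * δ⁻¹ + L) ^ 2) *
          (ENNReal.ofReal (2 * (2 * δ)) ^ 2 * ENNReal.ofReal (2 * R) ^ (n - 2)) := by
          rw [hc, ENNReal.ofReal_mul' (sq_nonneg _)]
          gcongr
          exact (measure_mono hTR).trans (volume_setOf_singDist_le_inter_closedBall_le hm hn _ _)
      _ = ENNReal.ofReal ε *
          (ENNReal.ofReal ((4 * (C + δ * L)) ^ 2) * ENNReal.ofReal (2 * R) ^ (n - 2)) := by
          rw [← ENNReal.ofReal_pow (by positivity), mul_assoc,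
            ← mul_assoc (ENNReal.ofReal ((C * δ⁻¹ + L) ^ 2)), ← ENNReal.ofReal_mul (sq_nonneg _),
            show (C * δ⁻¹ + L) ^ 2 * (2 * (2 * δ)) ^ 2 = (4 * (C + δ * L)) ^ 2 by field_simp; ring]
      _ ≤ _ := by gcongr; exact mul_le_of_le_one_left L.coe_nonneg hδ₁
  calc _ ≤ ∫⁻ x in Ω,
          (ENNReal.ofReal (w x ^ 2 * ‖fderiv ℝ η x‖ ^ 2) + T.indicator (fun _ => c) x) :=
        lintegral_mono (ofReal_sq_mul_norm_fderiv_mul_cutoff_le hη hC hs hδ hw)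
    _ = (∫⁻ x in Ω, ENNReal.ofReal (w x ^ 2 * ‖fderiv ℝ η x‖ ^ 2))
          + ∫⁻ x in Ω, T.indicator (fun _ => c) x :=
        lintegral_add_right _ (measurable_const.indicator hT)
    _ ≤ _ := add_le_add_right ((setLIntegral_le_lintegral _ _).trans
          ((lintegral_indicator_const hT c).trans_le hvol)) _

end SingDist

theorem hardy_inequality_removable_singularity_general
    (n m : ℕ) (hn : 2 ≤ n) (hm : 2 ≤ m)
    (Ω : Set (EuclideanSpace ℝ (Fin n))) (hΩo : IsOpen Ω)
    (w : EuclideanSpace ℝ (Fin n) → ℝ) (K : NNReal) (hw : LipschitzOnWith K w (closure Ω))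
    (hw0 : ∀ x ∈ closure Ω, (∀ l : Fin n, (l : ℕ) < m → x l = 0) → w x = 0)
    (hyp : ∀ (η : EuclideanSpace ℝ (Fin n) → ℝ) (L : NNReal), LipschitzWith L η →
      HasCompactSupport η →
      tsupport η ⊆ Ω \ {x : EuclideanSpace ℝ (Fin n) | ∀ l : Fin n, (l : ℕ) < m → x l = 0} →
      ENNReal.ofReal ((m : ℝ) - 1) *
          ∫⁻ x in Ω, ENNReal.ofReal
            (w x ^ 2 * η x ^ 2 / ∑ l : Fin n, if (l : ℕ) < m then x l ^ 2 else 0)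
        ≤ ∫⁻ x in Ω, ENNReal.ofReal (w x ^ 2 * ‖fderiv ℝ η x‖ ^ 2)) :
    ∀ (η : EuclideanSpace ℝ (Fin n) → ℝ) (L : NNReal), LipschitzWith L η →
      HasCompactSupport η → tsupport η ⊆ Ω →
      ENNReal.ofReal ((m : ℝ) - 1) *
          ∫⁻ x in Ω, ENNReal.ofReal
            (w x ^ 2 * η x ^ 2 / ∑ l : Fin n, if (l : ℕ) < m then x l ^ 2 else 0)
        ≤ ∫⁻ x in Ω, ENNReal.ofReal (w x ^ 2 * ‖fderiv ℝ η x‖ ^ 2) := by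
  intro η L hη hηc hηs
  simp only [← singDist_sq] at hyp ⊢
  obtain ⟨C, hC⟩ : ∃ C : ℝ≥0, ∀ x, |η x| ≤ C := by
    obtain ⟨C, hC⟩ := hη.continuous.bounded_above_of_compact_support hηc
    exact ⟨C.toNNReal, fun x => (hC x).trans (Real.le_coe_toNNReal C)⟩
  obtain ⟨R, hR⟩ := hηc.isCompact.isBounded.subset_closedBall 0
  have hs := (lipschitzWith_singDist (n := n) m).continuous
  have hηm := hη.continuous.measurable
  have hwm : AEMeasurable w (volume.restrict Ω) :=
    (hw.continuousOn.mono subset_closure).aemeasurable hΩo.measurableSet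
  refine ENNReal.le_of_forall_pos_le_add_ofReal_mul (M := ENNReal.ofReal ((4 * (C + L)) ^ 2) *
    ENNReal.ofReal (2 * R) ^ (n - 2)) (by finiteness) fun ε hε => ?_
  obtain ⟨δ₀, hδ₀, hsmall⟩ := hηc.isCompact.exists_pos_sq_le_of_singDist_le
    (hw.continuousOn.mono (hηs.trans subset_closure))
    (fun x hx => hw0 x (subset_closure (hηs hx))) hε
  set δ := min (δ₀ / 2) 1
  have hδ : 0 < δ := lt_min (half_pos hδ₀) one_pos
  -- the integrand vanishes on `S` because `x / 0 = 0`
  rw [← iSup_lintegral_ofReal_cutoff_sq_mul hs.measurable (by fun_prop)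
    (fun x hx => by simp [hx.antisymm (norm_nonneg _)]) hδ, ENNReal.mul_iSup]
  refine iSup_le fun k => ?_
  have hδk : 0 < δ / (k + 1) := by positivity
  have hδkδ : δ / (k + 1) ≤ δ := div_le_self hδ.le (by simp)
  calc _ = ENNReal.ofReal ((m : ℝ) - 1) * ∫⁻ x in Ω, ENNReal.ofReal
          (w x ^ 2 * (η x * cutoff (δ / (k + 1)) (singDist m x)) ^ 2 / singDist m x ^ 2) := by
        refine congrArg _ (lintegral_congr fun x => ?_)
        rw [← ENNReal.ofReal_mul (sq_nonneg _)]
        ring_nf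
    _ ≤ _ := hyp _ _ (hη.mul_cutoff hC (lipschitzWith_singDist m) _) hηc.mul_right
        (tsupport_mul_cutoff_singDist_subset hηs hδk)
    _ ≤ _ := lintegral_sq_mul_norm_fderiv_mul_cutoff_le hm hn Ω hη hC hR hδk
        (hδkδ.trans (min_le_right _ _))
        fun x hx hxs => hsmall x hx (by linarith [min_le_left (δ₀ / 2) 1])

/-- Removable-singularity step (proof of Lemma 2.3): if the Hardy-type inequality
`(m-1) ∫_Ω w²η²/s² ≤ ∫_Ω w²|∇η|²` holds for all Lipschitz `η` compactly supported in
`Ω ∖ S`, where `S = {x₁ = ⋯ = x_m = 0}` and `w` is Lipschitz on `Ω̄` and vanishes on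
`S ∩ Ω̄`, then it holds for all Lipschitz `η` compactly supported in `Ω`. -/
theorem hardy_inequality_removable_singularity
    (n m : ℕ) (hn : 2 ≤ n) (hm : 2 ≤ m) (hmn : m ≤ n)
    (Ω : Set (EuclideanSpace ℝ (Fin n))) (hΩo : IsOpen Ω) (hΩb : Bornology.IsBounded Ω)
    (w : EuclideanSpace ℝ (Fin n) → ℝ) (K : NNReal) (hw : LipschitzOnWith K w (closure Ω))
    (hw0 : ∀ x ∈ closure Ω, (∀ l : Fin n, (l : ℕ) < m → x l = 0) → w x = 0)
    (hyp : ∀ (η : EuclideanSpace ℝ (Fin n) → ℝ) (L : NNReal), LipschitzWith L η →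
      HasCompactSupport η →
      tsupport η ⊆ Ω \ {x : EuclideanSpace ℝ (Fin n) | ∀ l : Fin n, (l : ℕ) < m → x l = 0} →
      ENNReal.ofReal ((m : ℝ) - 1) *
          ∫⁻ x in Ω, ENNReal.ofReal
            (w x ^ 2 * η x ^ 2 / ∑ l : Fin n, if (l : ℕ) < m then x l ^ 2 else 0)
        ≤ ∫⁻ x in Ω, ENNReal.ofReal (w x ^ 2 * ‖fderiv ℝ η x‖ ^ 2)) :
    ∀ (η : EuclideanSpace ℝ (Fin n) → ℝ) (L : NNReal), LipschitzWith L η →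
      HasCompactSupport η → tsupport η ⊆ Ω →
      ENNReal.ofReal ((m : ℝ) - 1) *
          ∫⁻ x in Ω, ENNReal.ofReal
            (w x ^ 2 * η x ^ 2 / ∑ l : Fin n, if (l : ℕ) < m then x l ^ 2 else 0)
        ≤ ∫⁻ x in Ω, ENNReal.ofReal (w x ^ 2 * ‖fderiv ℝ η x‖ ^ 2) :=
  hardy_inequality_removable_singularity_general n m hn hm Ω hΩo w K hw hw0 hyp
end
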